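/- arXiv:1602.03474 — 3 statements merged into one kernel-verified Lean document; each statement's English description precedes it below -/
import Mathlib

section
/- Define V₁ := ∫_𝒱 |v'₁| dv'. There exists γ* > 0 such that for every γ ∈ (0,γ*), setting β := γχ/(1+χ) and defining the modified weight m̃(x,v) := (1 + γ (v·x)/⟨x⟩ − β |v·x|/⟨x⟩) e^{γ⟨x⟩}, there exist constants δ ∈ (0,1), A > 0 and α > 0 such that: (i) (1−δ) e^{γ⟨x⟩} ≤ m̃(x,v) ≤ (1+δ) e^{γ⟨x⟩} for all (x,v) ∈ ℝ^d × 𝒱; and (ii) for every (x,v) ∈ ℝ^d × 𝒱 with x·v ≠ 0, (ℒ* m̃)(x,v) ≤ A − α m̃(x,v). -/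
open MeasureTheory Metric Real Filter
open scoped RealInnerProductSpace ENNReal FourierTransform

noncomputable section

abbrev E (d : ℕ) := EuclideanSpace ℝ (Fin d)

/-- The velocity ball `𝒱 = B(0,V0)`. -/
def VV (d : ℕ) (V0 : ℝ) : Set (E d) := Metric.closedBall 0 V0

/-- Lebesgue measure on `ℝ^d × 𝒱`. -/
def μV (d : ℕ) (V0 : ℝ) : Measure (E d × E d) :=
  (volume : Measure (E d × E d)).restrict (Set.univ ×ˢ VV d V0)

/-- `⟨x⟩ = (1+|x|²)^{1/2}`. -/
def jap {d : ℕ} (x : E d) : ℝ := Real.sqrt (1 + ‖x‖ ^ 2)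

/-- The turning kernel `K(x,v) = 1 + χ sign(x⋅v)`. -/
def turnK {d : ℕ} (χ : ℝ) (x v : E d) : ℝ := 1 + χ * Real.sign ⟪x, v⟫

/-- The dual run-and-tumble operator
`(ℒ*φ)(x,v) = v·∇ₓφ(x,v) + K(x,v) ∫_𝒱 (φ(x,v') - φ(x,v)) dv'`. -/
def Ldual {d : ℕ} (χ V0 : ℝ) (φ : E d × E d → ℝ) (x v : E d) : ℝ :=
  fderiv ℝ (fun y => φ (y, v)) x v +
    turnK χ x v * ∫ v' in VV d V0, (φ (x, v') - φ (x, v))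

/-- The total mass `⟨⟨g⟩⟩`. -/
def mass {d : ℕ} (V0 : ℝ) (g : E d → E d → ℝ) : ℝ :=
  ∫ x, ∫ v in VV d V0, g x v

/-- Test functions `φ ∈ C_c^∞(ℝ^d × ℝ^d)`. -/
def IsTest {d : ℕ} (φ : E d × E d → ℝ) : Prop :=
  ContDiff ℝ (⊤ : ℕ∞) φ ∧ HasCompactSupport φ

/-- Weighted `L¹(m)` norm. -/
def wL1 {d : ℕ} (V0 : ℝ) (m : E d → ℝ) (g : E d → E d → ℝ) : ℝ :=
  ∫ x, ∫ v in VV d V0, |g x v| * m x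

/-- Weak solution in `C([0,∞); L¹(m))` of `∂ₜ f = 𝒜 f`, where `Op` is the formal dual of the
generator `𝒜`, with initial datum `f₀`. -/
def IsWeakSol {d : ℕ} (V0 : ℝ) (Op : (E d × E d → ℝ) → E d → E d → ℝ)
    (m : E d → ℝ) (f : ℝ → E d → E d → ℝ) (f₀ : E d → E d → ℝ) : Prop :=
  f 0 = f₀ ∧
  (∀ t, 0 ≤ t → Integrable (fun p : E d × E d => m p.1 * f t p.1 p.2) (μV d V0)) ∧
  (∀ t, 0 ≤ t → Filter.Tendsto
      (fun s => ∫ x, ∫ v in VV d V0, |f s x v - f t x v| * m x)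
      (nhdsWithin t (Set.Ici 0)) (nhds 0)) ∧
  (∀ φ : E d × E d → ℝ, IsTest φ → ∀ t, 0 ≤ t →
    (∫ x, ∫ v in VV d V0, f t x v * φ (x, v)) -
      (∫ x, ∫ v in VV d V0, f₀ x v * φ (x, v)) =
    ∫ s in (0:ℝ)..t, ∫ x, ∫ v in VV d V0, f s x v * Op φ x v)

/-- The modified exponential weight `m̃`. -/
def mtilde {d : ℕ} (γ β : ℝ) (x v : E d) : ℝ :=
  (1 + γ * ⟪v, x⟫ / jap x - β * |⟪v, x⟫| / jap x) * Real.exp (γ * jap x)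

lemma jap_pos {d : ℕ} (x : E d) : 0 < jap x :=
  Real.sqrt_pos.2 (by positivity)

lemma jap_sq {d : ℕ} (x : E d) : jap x ^ 2 = 1 + ‖x‖ ^ 2 :=
  Real.sq_sqrt (by positivity)

lemma hasFDerivAt_jap {d : ℕ} (x : E d) :
    HasFDerivAt jap ((1 / (2 * jap x)) • (2 • (innerSL ℝ x))) x := by
  have h1 : HasFDerivAt (fun y : E d => 1 + ‖y‖ ^ 2)
      (2 • (innerSL ℝ x)) x := by
    simpa using ((hasFDerivAt_id x).norm_sq.const_add 1)
  have := h1.sqrt (by positivity)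
  show HasFDerivAt (fun y => jap y) _ x
  simpa [jap] using this

lemma deriv_eval {d : ℕ} (γ β : ℝ) (v x : E d) (hr : ⟪v, x⟫ ≠ 0) :
    fderiv ℝ (fun y => mtilde γ β y v) x v =
      ((γ - β * Real.sign ⟪v, x⟫) * (‖v‖ ^ 2 - ⟪v, x⟫ ^ 2 / (1 + ‖x‖ ^ 2)) / jap x
        + (1 + γ * ⟪v, x⟫ / jap x - β * |⟪v, x⟫| / jap x) * (γ * ⟪v, x⟫ / jap x))
        * Real.exp (γ * jap x) := by
  have hjpos := jap_pos x
  have hjne : jap x ≠ 0 := hjpos.ne'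
  have hg : HasFDerivAt (fun y : E d => ⟪v, y⟫) (innerSL ℝ v) x :=
    (innerSL ℝ v).hasFDerivAt
  have habs : HasFDerivAt (fun y : E d => |⟪v, y⟫|)
      ((SignType.sign ⟪v, x⟫ : ℝ) • innerSL ℝ v) x := hg.abs hr
  have hj := hasFDerivAt_jap x
  have hjinv : HasFDerivAt (fun y : E d => (jap y)⁻¹)
      ((-(jap x ^ 2)⁻¹) • ((1 / (2 * jap x)) • (2 • (innerSL ℝ x)))) x :=
    (hasDerivAt_inv hjne).comp_hasFDerivAt x hj
  have h2 := ((hg.mul hjinv).const_mul γ)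
  have h3 := ((habs.mul hjinv).const_mul β)
  have hpre := (h2.const_add 1).sub h3
  have hexp := (hj.const_mul γ).exp
  have hm := hpre.mul hexp
  have heq : (fun y => mtilde γ β y v) =
      (fun y => (1 + γ * ((fun y : E d => ⟪v, y⟫) y * (jap y)⁻¹)
        - β * ((fun y : E d => |⟪v, y⟫|) y * (jap y)⁻¹)) * Real.exp (γ * jap y)) := by
    funext y
    simp only [mtilde]
    ring
  rw [heq, (show HasFDerivAt (fun y => (1 + γ * ((fun y : E d => ⟪v, y⟫) y * (jap y)⁻¹)
      - β * ((fun y : E d => |⟪v, y⟫|) y * (jap y)⁻¹)) * Real.exp (γ * jap y)) _ x from hm).fderiv]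
  have hxv : ⟪x, v⟫ = ⟪v, x⟫ := real_inner_comm v x
  have hvv : ⟪v, v⟫ = ‖v‖ ^ 2 := real_inner_self_eq_norm_sq v
  have habs2 : |⟪v, x⟫| = Real.sign ⟪v, x⟫ * ⟪v, x⟫ := by
    rcases hr.lt_or_gt with h | h
    · rw [abs_of_neg h, Real.sign_of_neg h]; ring
    · rw [abs_of_pos h, Real.sign_of_pos h]; ring
  have hsign : ((SignType.sign ⟪v, x⟫ : SignType) : ℝ) = Real.sign ⟪v, x⟫ := by
    rcases hr.lt_or_gt with h | h
    · rw [sign_neg h, Real.sign_of_neg h]; simp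
    · rw [sign_pos h, Real.sign_of_pos h]; simp
  simp only [ContinuousLinearMap.add_apply, ContinuousLinearMap.coe_smul', Pi.smul_apply,
    ContinuousLinearMap.smul_apply, innerSL_apply_apply, smul_eq_mul, nsmul_eq_mul,
    ContinuousLinearMap.sub_apply, Pi.sub_apply, Pi.mul_apply, hxv, hvv, hsign, habs2]
  have hj2 := jap_sq x
  have hjne2 : (1:ℝ) + ‖x‖ ^ 2 ≠ 0 := by positivity
  field_simp
  rw [← hj2]
  ring

lemma int_inner_zero {d : ℕ} (V0 : ℝ) (x : E d) :
    ∫ v in Metric.closedBall (0 : E d) V0, ⟪v, x⟫ = 0 := by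
  have hmp : MeasurePreserving (Neg.neg : E d → E d) volume volume :=
    Measure.measurePreserving_neg _
  have hemb : MeasurableEmbedding (Neg.neg : E d → E d) :=
    (Homeomorph.neg (E d)).measurableEmbedding
  have hpre : (Neg.neg : E d → E d) ⁻¹' (Metric.closedBall 0 V0) =
      Metric.closedBall 0 V0 := by
    ext v; simp [mem_closedBall, dist_eq_norm]
  have h := hmp.setIntegral_preimage_emb hemb (fun v => ⟪v, x⟫) (Metric.closedBall 0 V0)
  rw [hpre] at h
  have h2 : ∫ v in Metric.closedBall (0 : E d) V0, ⟪-v, x⟫ =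
      ∫ v in Metric.closedBall (0 : E d) V0, ⟪v, x⟫ := h
  have h3 : ∫ v in Metric.closedBall (0 : E d) V0, ⟪-v, x⟫ =
      - ∫ v in Metric.closedBall (0 : E d) V0, ⟪v, x⟫ := by
    rw [← integral_neg]
    congr 1; funext v; rw [inner_neg_left]
  linarith [h2.symm.trans h3]

lemma integrableOn_absinner {d : ℕ} (V0 : ℝ) (u : E d) :
    IntegrableOn (fun v : E d => |⟪v, u⟫|) (Metric.closedBall 0 V0) volume := by
  exact ((continuous_id.inner continuous_const).abs).continuousOn.integrableOn_compact
    (isCompact_closedBall 0 V0)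

lemma exists_c1 {d : ℕ} (hd : 1 ≤ d) (V0 : ℝ) (hV0 : 0 < V0)
    (hvol : volume (Metric.closedBall (0 : E d) V0) = 1) :
    ∃ c1 : ℝ, 0 < c1 ∧ ∀ x : E d,
      c1 * ‖x‖ ≤ ∫ v in Metric.closedBall (0 : E d) V0, |⟪v, x⟫| := by
  set B := Metric.closedBall (0 : E d) V0 with hB
  have hvolR : (volume B).toReal = 1 := by rw [hvol]; simp
  set F : E d → ℝ := fun u => ∫ v in B, |⟪v, u⟫| with hF
  have hint : ∀ u : E d, IntegrableOn (fun v : E d => |⟪v, u⟫|) B volume :=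
    fun u => integrableOn_absinner V0 u
  have key : ∀ u u' : E d, F u - F u' ≤ V0 * ‖u - u'‖ := by
    intro u u'
    rw [hF]
    rw [← integral_sub (hint u) (hint u')]
    have hle : ∀ v ∈ B, |⟪v, u⟫| - |⟪v, u'⟫| ≤ V0 * ‖u - u'‖ := by
      intro v hv
      have h1 : |⟪v, u⟫| - |⟪v, u'⟫| ≤ |⟪v, u⟫ - ⟪v, u'⟫| := abs_sub_abs_le_abs_sub _ _
      have h2 : ⟪v, u⟫ - ⟪v, u'⟫ = ⟪v, u - u'⟫ := (inner_sub_right v u u').symm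
      have h3 : |⟪v, u - u'⟫| ≤ ‖v‖ * ‖u - u'‖ := abs_real_inner_le_norm _ _
      have h4 : ‖v‖ ≤ V0 := mem_closedBall_zero_iff.1 hv
      rw [h2] at h1
      have h5 : ‖v‖ * ‖u - u'‖ ≤ V0 * ‖u - u'‖ :=
        mul_le_mul_of_nonneg_right h4 (norm_nonneg _)
      linarith
    calc ∫ v in B, (|⟪v, u⟫| - |⟪v, u'⟫|)
        ≤ ∫ _v in B, V0 * ‖u - u'‖ := by
          apply setIntegral_mono_on ((hint u).sub (hint u'))
            (integrableOn_const (by rw [hvol]; exact ENNReal.one_ne_top))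
            measurableSet_closedBall hle
      _ = V0 * ‖u - u'‖ := by rw [setIntegral_const, measureReal_def, hvolR, one_smul]
  have hlip : LipschitzWith (Real.toNNReal V0) F := by
    apply LipschitzWith.of_dist_le_mul
    intro u u'
    rw [Real.dist_eq, dist_eq_norm, Real.coe_toNNReal _ hV0.le]
    rw [abs_sub_le_iff]
    constructor
    · exact key u u'
    · have := key u' u
      rwa [norm_sub_rev] at this
  have hpos : ∀ u : E d, u ≠ 0 → 0 < F u := by
    intro u hu
    apply (setIntegral_pos_iff_support_of_nonneg_ae
      (Filter.Eventually.of_forall fun v => abs_nonneg _) (hint u)).2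
    set K : Submodule ℝ (E d) := LinearMap.ker (innerSL ℝ u).toLinearMap with hK
    have hKtop : K ≠ ⊤ := by
      intro h
      have : ⟪u, u⟫ = 0 := by
        have := h ▸ (Submodule.mem_top (x := u))
        simpa [hK, LinearMap.mem_ker] using this
      exact hu (inner_self_eq_zero.1 this)
    have hK0 : volume (K : Set (E d)) = 0 := Measure.addHaar_submodule _ K hKtop
    have hsub : B \ (K : Set (E d)) ⊆ Function.support (fun v : E d => |⟪v, u⟫|) ∩ B := by
      rintro v ⟨hvB, hvK⟩
      refine ⟨?_, hvB⟩
      simp only [Function.mem_support, abs_ne_zero]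
      intro h
      apply hvK
      simp only [hK, SetLike.mem_coe, LinearMap.mem_ker, ContinuousLinearMap.coe_coe,
        innerSL_apply_apply]
      rw [real_inner_comm]; exact h
    have h1 : volume (B \ (K : Set (E d))) = 1 := by
      rw [measure_diff_null hK0, hvol]
    calc (0 : ℝ≥0∞) < 1 := by norm_num
      _ = volume (B \ (K : Set (E d))) := h1.symm
      _ ≤ volume (Function.support (fun v : E d => |⟪v, u⟫|) ∩ B) := measure_mono hsub
  obtain ⟨u0, hu0⟩ : ∃ u : E d, ‖u‖ = 1 :=
    ⟨EuclideanSpace.single ⟨0, hd⟩ 1, by simp [EuclideanSpace.norm_single]⟩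
  obtain ⟨u1, hu1mem, hu1min⟩ :=
    (isCompact_sphere (0 : E d) 1).exists_isMinOn
      ⟨u0, by simpa [mem_sphere_zero_iff_norm] using hu0⟩
      hlip.continuous.continuousOn
  have hu1norm : ‖u1‖ = 1 := mem_sphere_zero_iff_norm.1 hu1mem
  have hu1ne : u1 ≠ 0 := by intro h; rw [h] at hu1norm; simp at hu1norm
  refine ⟨F u1, hpos u1 hu1ne, ?_⟩
  intro x
  rcases eq_or_ne x 0 with rfl | hx
  · simp [hF]
  · set u : E d := ‖x‖⁻¹ • x with hu
    have hxnorm : ‖x‖ ≠ 0 := norm_ne_zero_iff.2 hx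
    have humem : u ∈ Metric.sphere (0 : E d) 1 := by
      rw [mem_sphere_zero_iff_norm, hu, norm_smul]
      simp [abs_of_nonneg (norm_nonneg x), inv_mul_cancel₀ hxnorm]
    have hxu : x = ‖x‖ • u := by rw [hu, smul_inv_smul₀ hxnorm]
    have heval : ∫ v in B, |⟪v, x⟫| = ‖x‖ * F u := by
      rw [hF]
      rw [← integral_const_mul]
      congr 1; funext v
      rw [hu, inner_smul_right, abs_mul, abs_of_nonneg (inv_nonneg.2 (norm_nonneg x))]
      field_simp
    rw [heval]
    have := hu1min humem
    simp only [Set.mem_setOf_eq] at this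
    have h2 : F u1 ≤ F u := this
    nlinarith [norm_nonneg x]

lemma continuous_mtilde_v {d : ℕ} (γ β : ℝ) (x : E d) :
    Continuous (fun v : E d => mtilde γ β x v) := by
  unfold mtilde
  have h1 : Continuous (fun v : E d => ⟪v, x⟫) := continuous_id.inner continuous_const
  exact (((continuous_const.add ((continuous_const.mul h1).div_const _)).sub
    ((continuous_const.mul h1.abs).div_const _))).mul continuous_const

lemma integrableOn_inner' {d : ℕ} (V0 : ℝ) (x : E d) :
    IntegrableOn (fun v : E d => ⟪v, x⟫) (Metric.closedBall 0 V0) volume :=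
  (continuous_id.inner continuous_const).continuousOn.integrableOn_compact
    (isCompact_closedBall 0 V0)

lemma int_mtilde {d : ℕ} (γ β V0 : ℝ)
    (hvol : volume (Metric.closedBall (0 : E d) V0) = 1) (x : E d) :
    ∫ v' in Metric.closedBall (0 : E d) V0, mtilde γ β x v'
      = (1 - β * (∫ v' in Metric.closedBall (0 : E d) V0, |⟪v', x⟫|) / jap x)
          * Real.exp (γ * jap x) := by
  set B := Metric.closedBall (0 : E d) V0 with hB
  have hvolR : (volume B).toReal = 1 := by rw [hvol]; simp
  set e := Real.exp (γ * jap x) with he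
  set j := jap x with hj
  have hconst : IntegrableOn (fun _ : E d => e) B volume :=
    integrableOn_const (by rw [hvol]; exact ENNReal.one_ne_top)
  have hint1 := integrableOn_inner' V0 x
  have hint2 := integrableOn_absinner V0 x
  calc ∫ v' in B, mtilde γ β x v'
      = ∫ v' in B, (e + ((γ * e / j) * ⟪v', x⟫ + (-(β * e / j)) * |⟪v', x⟫|)) := by
        congr 1; funext v'
        simp only [mtilde, ← he, ← hj]
        ring
    _ = (∫ _ in B, e) + ((γ * e / j) * (∫ v' in B, ⟪v', x⟫)
          + (-(β * e / j)) * (∫ v' in B, |⟪v', x⟫|)) := by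
        have ha : IntegrableOn (fun v' : E d => (γ * e / j) * ⟪v', x⟫) B volume :=
          hint1.const_mul _
        have hb : IntegrableOn (fun v' : E d => (-(β * e / j)) * |⟪v', x⟫|) B volume :=
          hint2.const_mul _
        have hab : IntegrableOn
            (fun v' : E d => (γ * e / j) * ⟪v', x⟫ + (-(β * e / j)) * |⟪v', x⟫|) B volume :=
          ha.add hb
        rw [integral_add hconst hab, integral_add ha hb,
          integral_const_mul, integral_const_mul]
    _ = (1 - β * (∫ v' in B, |⟪v', x⟫|) / j) * e := by
        rw [setIntegral_const, measureReal_def, hvolR, one_smul, int_inner_zero]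
        ring

lemma jap_one_le {d : ℕ} (x : E d) : 1 ≤ jap x := by
  have h := Real.sq_sqrt (show (0:ℝ) ≤ 1 + ‖x‖^2 by positivity)
  have h2 := Real.sqrt_nonneg (1 + ‖x‖^2)
  rw [jap]
  nlinarith [sq_nonneg ‖x‖]

lemma norm_le_jap {d : ℕ} (x : E d) : ‖x‖ ≤ jap x := by
  have h := Real.sq_sqrt (show (0:ℝ) ≤ 1 + ‖x‖^2 by positivity)
  have h2 := Real.sqrt_nonneg (1 + ‖x‖^2)
  rw [jap]
  nlinarith [norm_nonneg x]

lemma jap_le_one_add {d : ℕ} (x : E d) : jap x ≤ 1 + ‖x‖ := by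
  have h := Real.sq_sqrt (show (0:ℝ) ≤ 1 + ‖x‖^2 by positivity)
  have h2 := Real.sqrt_nonneg (1 + ‖x‖^2)
  rw [jap]
  nlinarith [norm_nonneg x]

lemma abs_inner_le_V0_jap {d : ℕ} {V0 : ℝ} {x v : E d} (hv : ‖v‖ ≤ V0) :
    |⟪v, x⟫| ≤ V0 * jap x := by
  have h1 : |⟪v, x⟫| ≤ ‖v‖ * ‖x‖ := abs_real_inner_le_norm v x
  have h2 : ‖x‖ ≤ jap x := norm_le_jap x
  have h3 : 0 ≤ ‖v‖ := norm_nonneg v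
  have h4 : 0 ≤ ‖x‖ := norm_nonneg x
  nlinarith [jap_one_le x]

lemma mtilde_bounds {d : ℕ} (γ β V0 : ℝ) (hγ : 0 < γ) (hβ0 : 0 ≤ β) (hβγ : β ≤ γ)
    (x v : E d) (hv : ‖v‖ ≤ V0) :
    (1 - 2*γ*V0) * Real.exp (γ * jap x) ≤ mtilde γ β x v ∧
      mtilde γ β x v ≤ (1 + 2*γ*V0) * Real.exp (γ * jap x) := by
  have hjpos := jap_pos x
  have hrb := abs_inner_le_V0_jap (x := x) hv
  have hq : abs (γ * ⟪v, x⟫ / jap x - β * (abs ⟪v, x⟫) / jap x) ≤ 2*γ*V0 := by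
    rw [div_sub_div_same, abs_div, abs_of_pos hjpos]
    rw [div_le_iff₀ hjpos]
    have h1 : abs (γ * ⟪v, x⟫ - β * (abs ⟪v, x⟫)) ≤ γ * (abs ⟪v, x⟫) + β * (abs ⟪v, x⟫) := by
      calc abs (γ * ⟪v, x⟫ - β * (abs ⟪v, x⟫))
          ≤ abs (γ * ⟪v, x⟫) + abs (β * (abs ⟪v, x⟫)) := abs_sub _ _
        _ = γ * (abs ⟪v, x⟫) + β * (abs ⟪v, x⟫) := by
            rw [abs_mul, abs_mul, abs_of_pos hγ, abs_of_nonneg hβ0, abs_abs]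
    nlinarith [abs_nonneg ⟪v, x⟫]
  obtain ⟨hql, hqu⟩ := abs_le.1 hq
  have hepos := Real.exp_pos (γ * jap x)
  unfold mtilde
  constructor <;> nlinarith [hepos]

set_option maxHeartbeats 1000000 in
lemma main_est (χ γ β c1 V0 : ℝ) (hχ0 : 0 < χ) (hχ1 : χ < 1) (hV0 : 0 < V0)
    (hγ0 : 0 < γ) (hβpos : 0 < β) (hβχ : β * (1+χ) = γ * χ) (hβγ : β ≤ γ) (hc1pos : 0 < c1)
    (hsmall : 2*γ^2*V0^2 ≤ (1-χ)*β*c1/2)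
    (j n r nv W : ℝ) (hj1 : 1 ≤ j) (hnj : n ≤ j) (hj2 : j^2 = 1+n^2) (hn : 0 ≤ n)
    (hnv : 0 ≤ nv) (hnvV : nv ≤ V0) (hrabs : abs r ≤ nv*n) (hr : r ≠ 0)
    (hW : c1*n ≤ W) (hWnn : 0 ≤ W) :
    ((γ - β*Real.sign r)*(nv^2 - r^2/(1+n^2))/j + (1 + γ*r/j - β*(abs r)/j)*(γ*r/j))
      + (1 + χ*Real.sign r)*((1 - β*W/j) - (1 + γ*r/j - β*(abs r)/j))
     ≤ (2*γ*V0^2 - ((1-χ)*β*c1/2)*n)/j := by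
  have hjpos : 0 < j := by linarith
  have hjne : j ≠ 0 := hjpos.ne'
  have hrV : abs r ≤ V0*n := by nlinarith
  have h5 : 2*γ^2*V0^2*n ≤ ((1-χ)*β*c1/2)*n := mul_le_mul_of_nonneg_right hsmall hn
  have hrr0 : 0 ≤ r*(r/j) := by
    have h' : r*(r/j) = r^2/j := by ring
    rw [h']; positivity
  have hrr : r*(r/j) ≤ V0^2*n := by
    have h' : r*(r/j) = r^2/j := by ring
    rw [h', div_le_iff₀ hjpos]
    nlinarith [sq_abs r, abs_nonneg r, mul_nonneg (mul_nonneg hV0.le hV0.le) hn]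
  rw [le_div_iff₀ hjpos]
  rcases hr.lt_or_gt with hneg | hpos
  · rw [Real.sign_of_neg hneg, abs_of_neg hneg]
    have hXj : (((γ - β*(-1))*(nv^2 - r^2/(1+n^2))/j + (1 + γ*r/j - β*(-r)/j)*(γ*r/j))
          + (1 + χ*(-1))*((1 - β*W/j) - (1 + γ*r/j - β*(-r)/j))) * j
        = (γ+β)*(nv^2 - (r/j)^2) + (γ - (1-χ)*(γ+β))*r + (γ+β)*γ*(r*(r/j))
          - (1-χ)*(β*W) := by
      rw [← hj2]; field_simp; ring
    rw [hXj]
    have h1 : (γ+β)*(nv^2 - (r/j)^2) ≤ 2*γ*V0^2 := by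
      have e1 : nv^2 - (r/j)^2 ≤ V0^2 := by nlinarith [sq_nonneg (r/j)]
      calc (γ+β)*(nv^2 - (r/j)^2) ≤ (γ+β)*V0^2 :=
            mul_le_mul_of_nonneg_left e1 (by linarith)
        _ ≤ 2*γ*V0^2 := by nlinarith [sq_nonneg V0]
    have h2 : (γ - (1-χ)*(γ+β))*r ≤ 0 := by
      apply mul_nonpos_of_nonneg_of_nonpos _ hneg.le
      nlinarith [mul_pos hχ0 hβpos]
    have h3 : (γ+β)*γ*(r*(r/j)) ≤ 2*γ^2*V0^2*n := by
      calc (γ+β)*γ*(r*(r/j)) ≤ (γ+β)*γ*(V0^2*n) :=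
            mul_le_mul_of_nonneg_left hrr (mul_nonneg (by linarith) hγ0.le)
        _ ≤ 2*γ^2*V0^2*n := by
            nlinarith [mul_nonneg (mul_nonneg (mul_nonneg hγ0.le (sub_nonneg.2 hβγ))
              (sq_nonneg V0)) hn]
    have h4 : (1-χ)*(β*(c1*n)) ≤ (1-χ)*(β*W) :=
      mul_le_mul_of_nonneg_left (mul_le_mul_of_nonneg_left hW hβpos.le) (by linarith)
    linarith [h1, h2, h3, h4, h5]
  · rw [Real.sign_of_pos hpos, abs_of_pos hpos]
    have hXj : (((γ - β*1)*(nv^2 - r^2/(1+n^2))/j + (1 + γ*r/j - β*r/j)*(γ*r/j))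
          + (1 + χ*1)*((1 - β*W/j) - (1 + γ*r/j - β*r/j))) * j
        = (γ-β)*(nv^2 - (r/j)^2) + (γ - (1+χ)*(γ-β))*r + (γ-β)*γ*(r*(r/j))
          - (1+χ)*(β*W) := by
      rw [← hj2]; field_simp; ring
    rw [hXj]
    have hco : γ - (1+χ)*(γ-β) = 0 := by linear_combination hβχ
    have h2 : (γ - (1+χ)*(γ-β))*r = 0 := by rw [hco]; ring
    have h1 : (γ-β)*(nv^2 - (r/j)^2) ≤ 2*γ*V0^2 := by
      have e1 : nv^2 - (r/j)^2 ≤ V0^2 := by nlinarith [sq_nonneg (r/j)]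
      calc (γ-β)*(nv^2 - (r/j)^2) ≤ (γ-β)*V0^2 :=
            mul_le_mul_of_nonneg_left e1 (by linarith)
        _ ≤ 2*γ*V0^2 := by nlinarith [sq_nonneg V0]
    have h3 : (γ-β)*γ*(r*(r/j)) ≤ 2*γ^2*V0^2*n := by
      calc (γ-β)*γ*(r*(r/j)) ≤ (γ-β)*γ*(V0^2*n) :=
            mul_le_mul_of_nonneg_left hrr (mul_nonneg (by linarith) hγ0.le)
        _ ≤ 2*γ^2*V0^2*n := by
            nlinarith [mul_nonneg (mul_nonneg (mul_nonneg hγ0.le hβpos.le)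
              (sq_nonneg V0)) hn]
    have h4 : (1-χ)*(β*(c1*n)) ≤ (1+χ)*(β*W) := by
      have e1 : β*(c1*n) ≤ β*W := mul_le_mul_of_nonneg_left hW hβpos.le
      have e2 : 0 ≤ β*W := mul_nonneg hβpos.le hWnn
      nlinarith
    linarith [h1, h2, h3, h4, h5]

set_option maxHeartbeats 1000000 in
lemma end_est (γ V0 c2 α R E j n e m : ℝ) (hγ0 : 0 < γ) (hV0 : 0 < V0) (hc2 : 0 < c2)
    (hα : α = c2/16) (hδ : 2*γ*V0 < 1/2) (hR : R = max 1 (8*γ*V0^2/c2))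
    (hE : E = Real.exp (γ*(1+R))) (he : e = Real.exp (γ*j))
    (hj1 : 1 ≤ j) (hnj : n ≤ j) (hjn : j ≤ 1+n) (hn : 0 ≤ n)
    (hm : 0 ≤ m) (hm2 : m ≤ (1+2*γ*V0)*e) :
    (2*γ*V0^2 - c2*n)/j * e + α*m ≤ (2*γ*V0^2+2*α)*E := by
  have hjpos : 0 < j := by linarith
  have hepos : 0 < e := he ▸ Real.exp_pos _
  have hEpos : 0 < E := hE ▸ Real.exp_pos _
  have hαpos : 0 < α := by rw [hα]; positivity
  have hR1 : (1:ℝ) ≤ R := by rw [hR]; exact le_max_left _ _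
  have hαm : α*m ≤ α*((1+2*γ*V0)*e) := mul_le_mul_of_nonneg_left hm2 hαpos.le
  rcases le_total n R with hxR | hxR
  · have heE : e ≤ E := by
      rw [he, hE]
      exact Real.exp_le_exp.2 (by nlinarith)
    have h6 : (2*γ*V0^2 - c2*n)/j ≤ 2*γ*V0^2 := by
      rw [div_le_iff₀ hjpos]
      nlinarith [mul_nonneg hc2.le hn,
        mul_nonneg (mul_nonneg hγ0.le (sq_nonneg V0)) (sub_nonneg.2 hj1)]
    have h7 : (2*γ*V0^2 - c2*n)/j * e ≤ 2*γ*V0^2 * E := by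
      calc (2*γ*V0^2 - c2*n)/j * e ≤ 2*γ*V0^2 * e :=
            mul_le_mul_of_nonneg_right h6 hepos.le
        _ ≤ 2*γ*V0^2 * E := mul_le_mul_of_nonneg_left heE (by positivity)
    have h8 : α*((1+2*γ*V0)*e) ≤ α*(2*E) := by
      apply mul_le_mul_of_nonneg_left _ hαpos.le
      nlinarith
    nlinarith [h7, h8, hαm]
  · have hx2 : 8*γ*V0^2/c2 ≤ R := by rw [hR]; exact le_max_right _ _
    have hx2' : 8*γ*V0^2 ≤ c2*n := by
      rw [div_le_iff₀ hc2] at hx2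
      nlinarith [mul_le_mul_of_nonneg_left hxR hc2.le]
    have hx1 : 1 ≤ n := le_trans hR1 hxR
    have hja : j ≤ 2*n := by linarith
    have hkey2 : (2*γ*V0^2 - c2*n)/j ≤ -(c2/4) := by
      rw [div_le_iff₀ hjpos]
      nlinarith [mul_nonneg hc2.le (show (0:ℝ) ≤ 2*n - j by linarith)]
    have h9 : (2*γ*V0^2 - c2*n)/j * e ≤ -(c2/4)*e :=
      mul_le_mul_of_nonneg_right hkey2 hepos.le
    have h10 : α*((1+2*γ*V0)*e) ≤ (c2/8)*e := by
      rw [hα]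
      have e1 : (1+2*γ*V0)*e ≤ (3/2)*e := by nlinarith
      have e2 : (c2/16)*((1+2*γ*V0)*e) ≤ (c2/16)*((3/2)*e) :=
        mul_le_mul_of_nonneg_left e1 (by positivity)
      have e3 := mul_pos hc2 hepos
      linarith
    nlinarith [h9, h10, hαm, hEpos, hepos, mul_pos hc2 hepos, hαpos,
      mul_nonneg (mul_nonneg hγ0.le (sq_nonneg V0)) hEpos.le]


set_option maxHeartbeats 1000000 in
/-- Lyapunov inequality `ℒ* m̃ ≤ A - α m̃` for the modified exponential weight. -/
theorem stmt5 (d : ℕ) (hd : 1 ≤ d) (χ : ℝ) (hχ : χ ∈ Set.Ioo (0:ℝ) 1)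
    (V0 : ℝ) (hV0 : 0 < V0) (hvol : volume (VV d V0) = 1) :
    ∃ γstar : ℝ, 0 < γstar ∧
      ∀ γ ∈ Set.Ioo (0:ℝ) γstar, ∀ β : ℝ, β = γ * χ / (1 + χ) →
        ∃ δ ∈ Set.Ioo (0:ℝ) 1, ∃ A : ℝ, 0 < A ∧ ∃ α : ℝ, 0 < α ∧
          (∀ x : E d, ∀ v ∈ VV d V0,
            (1 - δ) * Real.exp (γ * jap x) ≤ mtilde γ β x v ∧
            mtilde γ β x v ≤ (1 + δ) * Real.exp (γ * jap x)) ∧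
          (∀ x : E d, ∀ v ∈ VV d V0, ⟪x, v⟫ ≠ 0 →
            Ldual χ V0 (fun p => mtilde γ β p.1 p.2) x v ≤ A - α * mtilde γ β x v) := by
  obtain ⟨hχ0, hχ1⟩ := hχ
  have h1mc : (0:ℝ) < 1 - χ := by linarith
  have h1χ : (0:ℝ) < 1 + χ := by linarith
  have hvol' : volume (Metric.closedBall (0 : E d) V0) = 1 := hvol
  have hvolR' : (volume (Metric.closedBall (0 : E d) V0)).toReal = 1 := by
    rw [hvol']; simp
  obtain ⟨c1, hc1pos, hc1⟩ := exists_c1 hd V0 hV0 hvol'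
  refine ⟨min (1/(4*V0)) ((1-χ)*χ*c1/(4*V0^2*(1+χ))), ?_, ?_⟩
  · apply lt_min
    · positivity
    · exact div_pos (mul_pos (mul_pos h1mc hχ0) hc1pos) (by positivity)
  intro γ hγ β hβ
  obtain ⟨hγ0, hγu⟩ := hγ
  have hγ1 : γ < 1/(4*V0) := lt_of_lt_of_le hγu (min_le_left _ _)
  have hγ2 : γ < (1-χ)*χ*c1/(4*V0^2*(1+χ)) := lt_of_lt_of_le hγu (min_le_right _ _)
  have hβpos : 0 < β := by rw [hβ]; positivity
  have hβχ : β * (1+χ) = γ * χ := by rw [hβ]; field_simp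
  have hβγ : β ≤ γ := by nlinarith
  have hδ1 : 2*γ*V0 < 1/2 := by
    have h' : γ*(4*V0) < 1 := by
      rw [lt_div_iff₀ (by positivity)] at hγ1; linarith
    linarith
  have hδ0 : 0 < 2*γ*V0 := by positivity
  have hsmall : 2*γ^2*V0^2 ≤ (1-χ)*β*c1/2 := by
    have hγ2' : γ*(4*V0^2*(1+χ)) < (1-χ)*χ*c1 := by
      rw [lt_div_iff₀ (by positivity)] at hγ2; linarith
    have key2 : (4*γ^2*V0^2)*(1+χ) ≤ ((1-χ)*c1*β)*(1+χ) := by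
      have h'' := mul_le_mul_of_nonneg_left hγ2'.le hγ0.le
      calc (4*γ^2*V0^2)*(1+χ) = γ*(γ*(4*V0^2*(1+χ))) := by ring
        _ ≤ γ*((1-χ)*χ*c1) := h''
        _ = (1-χ)*c1*(γ*χ) := by ring
        _ = (1-χ)*c1*(β*(1+χ)) := by rw [hβχ]
        _ = ((1-χ)*c1*β)*(1+χ) := by ring
    have key3 : 4*γ^2*V0^2 ≤ (1-χ)*c1*β := le_of_mul_le_mul_right key2 h1χ
    linarith
  have hc2pos : 0 < (1-χ)*β*c1/2 := by positivity
  have hαpos : 0 < (1-χ)*β*c1/32 := by positivity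
  refine ⟨2*γ*V0, ⟨hδ0, by linarith⟩,
    (2*γ*V0^2 + 2*((1-χ)*β*c1/32))
      * Real.exp (γ*(1+max 1 (8*γ*V0^2/((1-χ)*β*c1/2)))), ?_,
    (1-χ)*β*c1/32, hαpos, ?_, ?_⟩
  · exact mul_pos (by positivity) (Real.exp_pos _)
  · intro x v hv
    exact mtilde_bounds γ β V0 hγ0 hβpos.le hβγ x v (mem_closedBall_zero_iff.1 hv)
  · intro x v hv hinner
    have hvn : ‖v‖ ≤ V0 := mem_closedBall_zero_iff.1 hv
    have hr : ⟪v, x⟫ ≠ 0 := by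
      rw [real_inner_comm x v]; exact hinner
    have hjpos := jap_pos x
    have hj1 := jap_one_le x
    have hnj := norm_le_jap x
    have hj1a := jap_le_one_add x
    have hj2 := jap_sq x
    have hepos := Real.exp_pos (γ * jap x)
    have hWlb : c1 * ‖x‖ ≤ ∫ v' in Metric.closedBall (0:E d) V0, abs ⟪v', x⟫ := hc1 x
    have hWnn : 0 ≤ ∫ v' in Metric.closedBall (0:E d) V0, abs ⟪v', x⟫ :=
      setIntegral_nonneg measurableSet_closedBall (fun v' _ => abs_nonneg _)
    have hconstI : IntegrableOn (fun _ : E d => mtilde γ β x v)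
        (Metric.closedBall 0 V0) volume :=
      integrableOn_const (by rw [hvol']; exact ENNReal.one_ne_top)
    have hmI : IntegrableOn (fun v' : E d => mtilde γ β x v')
        (Metric.closedBall 0 V0) volume :=
      (continuous_mtilde_v γ β x).continuousOn.integrableOn_compact
        (isCompact_closedBall 0 V0)
    have hjump : (∫ v' in VV d V0, (mtilde γ β x v' - mtilde γ β x v))
        = (1 - β * (∫ v' in Metric.closedBall (0:E d) V0, abs ⟪v', x⟫) / jap x)
            * Real.exp (γ * jap x) - mtilde γ β x v := by
      have hVB : VV d V0 = Metric.closedBall (0:E d) V0 := rfl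
      rw [hVB, integral_sub hmI hconstI, int_mtilde γ β V0 hvol' x,
        setIntegral_const, measureReal_def, hvolR', one_smul]
    have hfd := deriv_eval γ β v x hr
    have hunf : Ldual χ V0 (fun p => mtilde γ β p.1 p.2) x v
        = fderiv ℝ (fun y => mtilde γ β y v) x v
          + (1 + χ * Real.sign ⟪x, v⟫)
            * ∫ v' in VV d V0, (mtilde γ β x v' - mtilde γ β x v) := rfl
    rw [hunf, hfd, hjump, ← real_inner_comm x v]
    -- now pure inequality
    have hest := main_est χ γ β c1 V0 hχ0 hχ1 hV0 hγ0 hβpos hβχ hβγ hc1pos hsmall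
      (jap x) ‖x‖ ⟪v, x⟫ ‖v‖ (∫ v' in Metric.closedBall (0:E d) V0, abs ⟪v', x⟫)
      hj1 hnj hj2 (norm_nonneg x) (norm_nonneg v) hvn
      (abs_real_inner_le_norm v x) hr hWlb hWnn
    have hb2 := mul_le_mul_of_nonneg_right hest hepos.le
    have hmb := mtilde_bounds γ β V0 hγ0 hβpos.le hβγ x v hvn
    have hm0 : 0 ≤ mtilde γ β x v := le_trans (by nlinarith) hmb.1
    have hb3 := end_est γ V0 ((1-χ)*β*c1/2) ((1-χ)*β*c1/32)
      (max 1 (8*γ*V0^2/((1-χ)*β*c1/2)))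
      (Real.exp (γ*(1+max 1 (8*γ*V0^2/((1-χ)*β*c1/2)))))
      (jap x) ‖x‖ (Real.exp (γ * jap x)) (mtilde γ β x v)
      hγ0 hV0 hc2pos (by ring) hδ1 rfl rfl rfl
      hj1 hnj hj1a (norm_nonneg x) hm0 hmb.2
    simp only [mtilde] at hb2 hb3 ⊢
    linarith [hb2, hb3]
end
end

section
/- Define, for t ≥ 0 and f₀ : ℝ^d × 𝒱 → ℝ measurable, (S_{B₀}(t) f₀)(x,v) := f₀(x − v t, v) · exp( − ∫_0^t K(x − v s, v) ds ). Then for every p ∈ [1,∞], every γ ∈ [0, (1−χ)/V0) and m(x) := e^{γ⟨x⟩}, one has ‖S_{B₀}(t) f₀‖_{L^p(m)} ≤ e^{(γ V0 + χ − 1) t} ‖f₀‖_{L^p(m)} for all t ≥ 0 and all f₀ ∈ L^p(m); note γ V0 + χ − 1 < 0. -/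
open MeasureTheory Metric Real Filter
open scoped RealInnerProductSpace ENNReal FourierTransform

noncomputable section

/-- The explicit semigroup `S_{B₀}` of the damped transport equation `∂ₜf = -v·∇ₓf - Kf`. -/
def SB0 {d : ℕ} (χ : ℝ) (t : ℝ) (f₀ : E d → E d → ℝ) (x v : E d) : ℝ :=
  f₀ (x - t • v) v * Real.exp (-∫ s in (0:ℝ)..t, turnK χ (x - s • v) v)

lemma aux_measurable_sign : Measurable Real.sign := by
  unfold Real.sign
  exact Measurable.ite (measurableSet_lt measurable_id measurable_const) measurable_const
    (Measurable.ite (measurableSet_lt measurable_const measurable_id) measurable_const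
      measurable_const)

lemma aux_sign_bounds (y : ℝ) : -1 ≤ Real.sign y ∧ Real.sign y ≤ 1 := by
  rcases Real.sign_apply_eq y with h | h | h <;> rw [h] <;> norm_num

lemma aux_jap_le {d : ℕ} (x y : E d) : jap x ≤ jap y + ‖x - y‖ := by
  have hb : ‖y‖ ≤ Real.sqrt (1 + ‖y‖ ^ 2) := by
    exact (Real.le_sqrt (norm_nonneg y) (by positivity)).mpr (by nlinarith)
  have ha : ‖x‖ ≤ ‖y‖ + ‖x - y‖ := norm_le_norm_add_norm_sub' x y
  have hy0 : 0 ≤ Real.sqrt (1 + ‖y‖ ^ 2) := Real.sqrt_nonneg _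
  have hc0 : 0 ≤ ‖x - y‖ := norm_nonneg _
  have hsq : Real.sqrt (1 + ‖y‖ ^ 2) ^ 2 = 1 + ‖y‖ ^ 2 :=
    Real.sq_sqrt (by positivity)
  rw [jap, jap, Real.sqrt_le_iff]
  refine ⟨by positivity, by nlinarith [norm_nonneg x, norm_nonneg y]⟩

lemma aux_intK {d : ℕ} (χ : ℝ) (hχ0 : 0 ≤ χ) (t : ℝ) (ht : 0 ≤ t) (x v : E d) :
    (1 - χ) * t ≤ ∫ s in (0:ℝ)..t, turnK χ (x - s • v) v := by
  have hmeas : Measurable fun s : ℝ => turnK χ (x - s • v) v := by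
    have h1 : Continuous fun s : ℝ => ⟪x - s • v, v⟫ :=
      Continuous.inner (continuous_const.sub (continuous_id.smul continuous_const))
        continuous_const
    exact measurable_const.add ((aux_measurable_sign.comp h1.measurable).const_mul χ)
  have hint : IntervalIntegrable (fun s : ℝ => turnK χ (x - s • v) v) volume 0 t := by
    rw [intervalIntegrable_iff]
    apply Measure.integrableOn_of_bounded (M := 1 + χ)
    · rw [Set.uIoc]; exact measure_Ioc_lt_top.ne
    · exact hmeas.aestronglyMeasurable
    · filter_upwards with s
      have := aux_sign_bounds ⟪x - s • v, v⟫
      rw [Real.norm_eq_abs, abs_le, turnK]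
      constructor <;> nlinarith [this.1, this.2]
  have hmono : ∀ s ∈ Set.Icc 0 t, (1 - χ : ℝ) ≤ turnK χ (x - s • v) v := by
    intro s _
    have := (aux_sign_bounds ⟪x - s • v, v⟫).1
    rw [turnK]; nlinarith
  calc (1 - χ) * t = ∫ _ in (0:ℝ)..t, (1 - χ) := by
        rw [intervalIntegral.integral_const, smul_eq_mul, sub_zero, mul_comm]
    _ ≤ _ := intervalIntegral.integral_mono_on ht intervalIntegrable_const hint hmono

lemma aux_mp {d : ℕ} (V0 t : ℝ) :
    MeasurePreserving (fun q : E d × E d => (q.1 - t • q.2, q.2)) (μV d V0) (μV d V0) := by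
  have h1 : μV d V0 = Measure.prod volume (volume.restrict (VV d V0)) := by
    rw [μV, Measure.volume_eq_prod, ← Measure.prod_restrict, Measure.restrict_univ]
  rw [h1]
  have hS : MeasurePreserving (fun p : E d × E d => (p.1, p.2 - t • p.1))
      ((volume.restrict (VV d V0)).prod volume) ((volume.restrict (VV d V0)).prod volume) :=
    MeasurePreserving.skew_product (g := fun v x => x - t • v)
      (MeasurePreserving.id _)
      (measurable_snd.sub (measurable_fst.const_smul t))
      (Filter.Eventually.of_forall fun v => map_sub_right_eq_self volume (t • v))
  exact Measure.measurePreserving_swap.comp (hS.comp Measure.measurePreserving_swap)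


/-- exponential decay of `S_{B₀}` in `L^p(e^{γ⟨x⟩})` for all `1 ≤ p ≤ ∞`. -/
theorem stmt7 (d : ℕ) (hd : 1 ≤ d) (χ : ℝ) (hχ : χ ∈ Set.Ioo (0:ℝ) 1)
    (V0 : ℝ) (hV0 : 0 < V0) (hvol : volume (VV d V0) = 1)
    (p : ℝ≥0∞) (hp : 1 ≤ p)
    (γ : ℝ) (hγ : 0 ≤ γ) (hγ' : γ < (1 - χ) / V0) :
    γ * V0 + χ - 1 < 0 ∧
    ∀ f₀ : E d → E d → ℝ,
      MemLp (fun q : E d × E d => Real.exp (γ * jap q.1) * f₀ q.1 q.2) p (μV d V0) →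
      ∀ t, 0 ≤ t →
        eLpNorm (fun q : E d × E d => Real.exp (γ * jap q.1) * SB0 χ t f₀ q.1 q.2) p (μV d V0)
          ≤ ENNReal.ofReal (Real.exp ((γ * V0 + χ - 1) * t)) *
            eLpNorm (fun q : E d × E d => Real.exp (γ * jap q.1) * f₀ q.1 q.2) p (μV d V0) := by
  obtain ⟨hχ0, hχ1⟩ := hχ
  have hkey : γ * V0 + χ - 1 < 0 := by
    have : γ * V0 < 1 - χ := (lt_div_iff₀ hV0).mp hγ'
    linarith
  refine ⟨hkey, ?_⟩
  intro f₀ hf₀ t ht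
  set C : ℝ := Real.exp ((γ * V0 + χ - 1) * t) with hC
  set g : E d × E d → ℝ := fun q => Real.exp (γ * jap q.1) * f₀ q.1 q.2 with hg
  set T : E d × E d → E d × E d := fun q => (q.1 - t • q.2, q.2) with hT
  have hmp : MeasurePreserving T (μV d V0) (μV d V0) := aux_mp V0 t
  have hbound : ∀ᵐ q ∂(μV d V0), ‖Real.exp (γ * jap q.1) * SB0 χ t f₀ q.1 q.2‖
      ≤ ‖(C • (g ∘ T)) q‖ := by
    have hmem : ∀ᵐ q ∂(μV d V0), q ∈ Set.univ ×ˢ VV d V0 :=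
      ae_restrict_mem (MeasurableSet.univ.prod measurableSet_closedBall)
    filter_upwards [hmem] with q hq
    obtain ⟨x, v⟩ := q
    have hv : ‖v‖ ≤ V0 := by
      have := hq.2
      rwa [VV, Metric.mem_closedBall, dist_zero_right] at this
    set I : ℝ := ∫ s in (0:ℝ)..t, turnK χ (x - s • v) v with hI
    have hIle : (1 - χ) * t ≤ I := aux_intK χ hχ0.le t ht x v
    have hjap : jap x ≤ jap (x - t • v) + t * V0 := by
      have h1 := aux_jap_le x (x - t • v)
      have h2 : ‖x - (x - t • v)‖ = t * ‖v‖ := by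
        rw [sub_sub_cancel, norm_smul, Real.norm_eq_abs, abs_of_nonneg ht]
      have h3 : t * ‖v‖ ≤ t * V0 := mul_le_mul_of_nonneg_left hv ht
      rw [h2] at h1; linarith
    have hexp : Real.exp (γ * jap x) * Real.exp (-I)
        ≤ C * Real.exp (γ * jap (x - t • v)) := by
      rw [← Real.exp_add, hC, ← Real.exp_add]
      apply Real.exp_le_exp.mpr
      have h4 : γ * jap x ≤ γ * (jap (x - t • v) + t * V0) :=
        mul_le_mul_of_nonneg_left hjap hγ
      nlinarith
    have h5 : ‖Real.exp (γ * jap x) * SB0 χ t f₀ x v‖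
        = (Real.exp (γ * jap x) * Real.exp (-I)) * ‖f₀ (x - t • v) v‖ := by
      rw [SB0, ← hI]
      rw [Real.norm_eq_abs, Real.norm_eq_abs, abs_mul, abs_mul,
        abs_of_pos (Real.exp_pos _), abs_of_pos (Real.exp_pos _)]
      ring
    have h6 : ‖(C • (g ∘ T)) (x, v)‖
        = (C * Real.exp (γ * jap (x - t • v))) * ‖f₀ (x - t • v) v‖ := by
      show ‖C * (Real.exp (γ * jap (x - t • v)) * f₀ (x - t • v) v)‖ = _
      rw [Real.norm_eq_abs, Real.norm_eq_abs, abs_mul, abs_mul,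
        abs_of_pos (Real.exp_pos _), abs_of_pos (Real.exp_pos _)]
      ring
    rw [h5, h6]
    exact mul_le_mul_of_nonneg_right hexp (norm_nonneg _)
  calc eLpNorm (fun q : E d × E d => Real.exp (γ * jap q.1) * SB0 χ t f₀ q.1 q.2) p (μV d V0)
      ≤ eLpNorm (C • (g ∘ T)) p (μV d V0) := eLpNorm_mono_ae hbound
    _ = ‖C‖₊ * eLpNorm (g ∘ T) p (μV d V0) := eLpNorm_const_smul C (g ∘ T) p (μV d V0)
    _ = ENNReal.ofReal C * eLpNorm g p (μV d V0) := by
        rw [eLpNorm_comp_measurePreserving hf₀.aestronglyMeasurable hmp,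
          ← enorm_eq_nnnorm, Real.enorm_eq_ofReal (Real.exp_pos _).le]
end
end

section
/- (Explicit stationary state in dimension one with two velocities.) Let χ ∈ (0,1), let V̄ := {−1, 1}, and for x ∈ ℝ, v ∈ V̄ set K(x,v) := 1 + χ·sign(x v), with sign(y) = −1 for y < 0 and sign(y) = 1 for y > 0. Define Ḡ(x,v) := e^{−χ|x|}. Then for every x ≠ 0 and every v ∈ V̄: (i) v · d/dx Ḡ(x,v) = −χ·sign(x v)·Ḡ(x,v); and (ii) −v · d/dx Ḡ(x,v) + (1/2) Σ_{v' ∈ V̄} [ K(x,v') Ḡ(x,v') − K(x,v) Ḡ(x,v) ] = 0, i.e. Ḡ is a (positive) stationary state of the one-dimensional run-and-tumble equation in which the velocity average over V̄ is the normalized sum (1/2)Σ_{v' ∈ {−1,1}}. -/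
open Real

noncomputable section

lemma deriv_exp_abs (χ : ℝ) {x : ℝ} (hx : x ≠ 0) :
    deriv (fun y : ℝ => Real.exp (-χ * |y|)) x
      = -χ * Real.sign x * Real.exp (-χ * |x|) := by
  rcases hx.lt_or_gt with h | h
  · have hev : (fun y : ℝ => Real.exp (-χ * |y|)) =ᶠ[nhds x]
        (fun y : ℝ => Real.exp (-χ * (-y))) := by
      filter_upwards [eventually_lt_nhds h] with y hy
      rw [abs_of_neg hy]
    rw [hev.deriv_eq]
    have : HasDerivAt (fun y : ℝ => Real.exp (-χ * (-y))) (Real.exp (-χ * (-x)) * χ) x := by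
      have h1 : HasDerivAt (fun y : ℝ => -χ * (-y)) χ x := by
        simpa using ((hasDerivAt_id x).neg.const_mul (-χ))
      simpa using h1.exp
    rw [this.deriv, Real.sign_of_neg h, abs_of_neg h]
    ring
  · have hev : (fun y : ℝ => Real.exp (-χ * |y|)) =ᶠ[nhds x]
        (fun y : ℝ => Real.exp (-χ * y)) := by
      filter_upwards [eventually_gt_nhds h] with y hy
      rw [abs_of_pos hy]
    rw [hev.deriv_eq]
    have : HasDerivAt (fun y : ℝ => Real.exp (-χ * y)) (Real.exp (-χ * x) * (-χ)) x := by
      have h1 : HasDerivAt (fun y : ℝ => -χ * y) (-χ) x := by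
        simpa using (hasDerivAt_id x).const_mul (-χ)
      simpa using h1.exp
    rw [this.deriv, Real.sign_of_pos h, abs_of_pos h]
    ring

/-- explicit stationary state `Ḡ(x,v) = e^{-χ|x|}` of the one-dimensional
run-and-tumble equation with two velocities `v ∈ {-1,1}`. -/
theorem stmt19 (χ : ℝ) (hχ : χ ∈ Set.Ioo (0:ℝ) 1) :
    ∀ x : ℝ, x ≠ 0 → ∀ v ∈ ({-1, 1} : Set ℝ),
      (v * deriv (fun y : ℝ => Real.exp (-χ * |y|)) x
          = -χ * Real.sign (x * v) * Real.exp (-χ * |x|)) ∧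
      (-(v * deriv (fun y : ℝ => Real.exp (-χ * |y|)) x)
          + (1 / 2) *
            (((1 + χ * Real.sign (x * 1)) * Real.exp (-χ * |x|)
                - (1 + χ * Real.sign (x * v)) * Real.exp (-χ * |x|))
              + ((1 + χ * Real.sign (x * (-1))) * Real.exp (-χ * |x|)
                - (1 + χ * Real.sign (x * v)) * Real.exp (-χ * |x|))) = 0) := by
  intro x hx v hv
  rw [deriv_exp_abs χ hx]
  have hs : ∀ w : ℝ, w ∈ ({-1, 1} : Set ℝ) → Real.sign (x * w) = w * Real.sign x := by
    intro w hw
    rcases hw with rfl | rfl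
    · rcases hx.lt_or_gt with h | h
      · rw [Real.sign_of_neg h, Real.sign_of_pos (by linarith : (0:ℝ) < x * -1)]; ring
      · rw [Real.sign_of_pos h, Real.sign_of_neg (by linarith : x * -1 < 0)]; ring
    · rcases hx.lt_or_gt with h | h
      · rw [Real.sign_of_neg h, Real.sign_of_neg (by linarith : x * 1 < 0)]; ring
      · rw [Real.sign_of_pos h, Real.sign_of_pos (by linarith : (0:ℝ) < x * 1)]; ring
  rw [hs v hv, hs 1 (by simp), hs (-1) (by simp)]
  have hvsq : v * v = 1 := by rcases hv with rfl | rfl <;> norm_num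
  constructor
  · ring
  · nlinarith [Real.exp_pos (-χ * |x|), hvsq]
end
end
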